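/- arXiv:1410.0332 — 3 statements merged into one kernel-verified Lean document; each statement's English description precedes it below -/
import Mathlib

section
/- Let n > 1 and let k be an integer with 4 ≤ k < z_1(n). Then z_1(n − k) ≤ 2k − 2. -/
/-!
Let `z₁(n) = fib a`, so `n = fib a + m` where the other parts of `n` have indices `≥ a + 2`.
Since `0 < d := fib a - k < fib a`, every Zeckendorf index of `d` is `< a`, hence the Zeckendorf
representation of `n - k = d + m` is that of `d` followed by the other parts of `n`, and
`z₁(n - k) = z₁(d) = fib b`. A Zeckendorf sum with smallest index `b` and all indices `< a` still
leaves room for `fib (b - 1)` below `fib a`, so `fib (b - 1) ≤ k`. Finally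
`fib b = 2 fib (b - 1) - fib (b - 3) ≤ 2k - 2` for `b ≥ 6`, while `fib b ≤ 5 < 2k - 2` otherwise.
-/

/-- `IsZeck n l` says that `l` is the Zeckendorf representation of `n`, recorded as the
list of indices of the Fibonacci parts in increasing order: every index is at least `2`,
consecutive indices differ by at least `2` (no two consecutive Fibonacci numbers), and the
corresponding Fibonacci numbers sum to `n`.  The parts of the Zeckendorf representation in
increasing order are then `z₁(n) = Nat.fib l.headI`, `z₂(n) = Nat.fib (l.getD 1 0)`, etc. -/
def IsZeck (n : ℕ) (l : List ℕ) : Prop :=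
  (∀ i ∈ l, 2 ≤ i) ∧ l.Chain' (fun a b => a + 2 ≤ b) ∧ (l.map Nat.fib).sum = n

open List Nat

lemma isChain_zero_cons_iff {l : List ℕ} :
    (0 :: l).IsChain (· + 2 ≤ ·) ↔ (∀ i ∈ l, 2 ≤ i) ∧ l.IsChain (· + 2 ≤ ·) := by
  have : Trans (fun a b : ℕ => a + 2 ≤ b) (· + 2 ≤ ·) (· + 2 ≤ ·) := ⟨fun h h' => by omega⟩
  simp only [isChain_iff_pairwise, pairwise_cons, zero_add]

lemma isZeck_iff {n : ℕ} {l : List ℕ} :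
    IsZeck n l ↔ l.reverse.IsZeckendorfRep ∧ (l.map fib).sum = n := by
  rw [IsZeck, IsZeckendorfRep, ← reverse_cons, isChain_reverse, isChain_zero_cons_iff, and_assoc]
  rfl -- the deprecated `List.Chain'` unfolds to `List.IsChain`

lemma IsZeck.unique {n : ℕ} {l l' : List ℕ} (h : IsZeck n l) (h' : IsZeck n l') : l = l' := by
  rw [isZeck_iff] at h h'
  rw [← reverse_inj, ← zeckendorf_sum_fib h.1, ← zeckendorf_sum_fib h'.1]
  simp only [map_reverse, sum_reverse, h.2, h'.2]

lemma isZeck_zeckendorf (n : ℕ) : IsZeck n (zeckendorf n).reverse := by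
  rw [isZeck_iff, reverse_reverse, map_reverse, sum_reverse]
  exact ⟨isZeckendorfRep_zeckendorf n, sum_zeckendorf_fib n⟩

lemma IsZeck.ne_nil {n : ℕ} {l : List ℕ} (h : IsZeck n l) (hn : n ≠ 0) : l ≠ [] := by
  rintro rfl
  exact hn h.2.2.symm

lemma IsZeck.lt_of_lt_fib {n a : ℕ} {l : List ℕ} (h : IsZeck n l) (hn : n < fib a) :
    ∀ i ∈ l, i < a := fun _ hi =>
  fib_mono.reflect_lt <| (le_sum_of_mem (mem_map_of_mem hi)).trans_lt (h.2.2 ▸ hn)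

lemma fib_add_fib_sub_one {b : ℕ} (hb : b ≠ 0) : fib b + fib (b - 1) = fib (b + 1) := by
  rw [fib_add_one hb, add_comm]

lemma sum_fib_add_fib_sub_one_le {a b : ℕ} {r : List ℕ} (hc : (b :: r).IsChain (· + 2 ≤ ·))
    (ha : ∀ i ∈ b :: r, i < a) (hb : b ≠ 0) : ((b :: r).map fib).sum + fib (b - 1) ≤ fib a := by
  induction r generalizing b with
  | nil => simpa [fib_add_fib_sub_one hb] using fib_mono (ha b mem_cons_self)
  | cons c r ih =>
    rw [isChain_cons_cons] at hc
    have hcr := ih hc.2 (fun i hi => ha i (mem_cons_of_mem b hi)) (by omega)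
    calc ((b :: c :: r).map fib).sum + fib (b - 1)
        = fib (b + 1) + ((c :: r).map fib).sum := by
          rw [map_cons, sum_cons, ← fib_add_fib_sub_one hb]; ring
      _ ≤ fib (c - 1) + ((c :: r).map fib).sum := by gcongr; omega
      _ ≤ fib a := by omega

lemma IsZeck.add_fib_sub_one_le {n a b : ℕ} {r : List ℕ} (h : IsZeck n (b :: r))
    (hn : n < fib a) : n + fib (b - 1) ≤ fib a := by
  obtain ⟨h2, hc, rfl⟩ := id h
  exact sum_fib_add_fib_sub_one_le hc (h.lt_of_lt_fib hn) (by have := h2 b mem_cons_self; omega)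

lemma IsZeck.append_of_lt_fib {d n a : ℕ} {l t : List ℕ} (hd : IsZeck d l) (hn : IsZeck n (a :: t))
    (hda : d < fib a) : IsZeck (n - (fib a - d)) (l ++ t) := by
  obtain ⟨hd2, hdc : l.IsChain _, hdsum⟩ := id hd
  obtain ⟨hn2, hnc : (a :: t).IsChain _, hnsum⟩ := hn
  rw [isChain_cons] at hnc
  refine ⟨?_, hdc.append hnc.2 fun x hx y hy => ?_, ?_⟩
  · grind
  · have := hd.lt_of_lt_fib hda x (mem_of_mem_getLast? hx)
    have := hnc.1 y hy
    omega
  · rw [map_cons, sum_cons] at hnsum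
    rw [map_append, List.sum_append, hdsum]
    omega

lemma fib_le_two_mul_sub_two {b k : ℕ} (hb : fib (b - 1) ≤ k) (hk : 4 ≤ k) : fib b ≤ 2 * k - 2 := by
  rcases le_or_gt b 5 with hb5 | hb5
  · have : fib b ≤ 5 := fib_mono hb5
    omega
  · obtain ⟨c, rfl⟩ : ∃ c, b = c + 6 := ⟨b - 6, by omega⟩
    have h6 : fib (c + 6) + fib (c + 3) = 2 * fib (c + 5) := by simp only [fib_add_two]; ring
    have : 2 ≤ fib (c + 3) := fib_mono (show 3 ≤ c + 3 by omega)
    change fib (c + 5) ≤ k at hb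
    omega

theorem z1_sub_le_two_mul_sub_two_general (n k : ℕ) (ln lm : List ℕ)
    (hln : IsZeck n ln) (hlm : IsZeck (n - k) lm)
    (hk1 : 4 ≤ k) (hk2 : k < Nat.fib ln.headI) :
    Nat.fib lm.headI ≤ 2 * k - 2 := by
  obtain ⟨a, t, rfl⟩ := exists_cons_of_ne_nil (l := ln) (by rintro rfl; simp at hk2)
  rw [headI_cons] at hk2
  have hda : fib a - k < fib a := by omega
  have hd := isZeck_zeckendorf (fib a - k)
  obtain ⟨b, r, hbr⟩ := exists_cons_of_ne_nil (hd.ne_nil (by omega))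
  rw [hbr] at hd
  have hlm' : lm = b :: r ++ t :=
    hlm.unique (by simpa only [Nat.sub_sub_self hk2.le] using hd.append_of_lt_fib hln hda)
  rw [hlm', cons_append, headI_cons]
  exact fib_le_two_mul_sub_two (by have := hd.add_fib_sub_one_le hda; omega) hk1

/-- Let `n > 1` and let `k` be an integer with `4 ≤ k < z₁(n)`.  Then `z₁(n - k) ≤ 2k - 2`. -/
theorem z1_sub_le_two_mul_sub_two (n k : ℕ) (ln lm : List ℕ)
    (hln : IsZeck n ln) (hlm : IsZeck (n - k) lm)
    (hn : 1 < n) (hk1 : 4 ≤ k) (hk2 : k < Nat.fib ln.headI) :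
    Nat.fib lm.headI ≤ 2 * k - 2 :=
  z1_sub_le_two_mul_sub_two_general n k ln lm hln hlm hk1 hk2
end

section
/- For every positive integer n and every natural number r, 𝒢(n, r) = 0 if and only if r < z_1(n). -/
/-- The Grundy values of single-heap Fibonacci nim positions `(n, r)`, where `n` is the heap
size and `r` is the maximal number of tokens that may be removed on the next move:
`grundy n r` is the least natural number not of the form
`grundy (n - k) (min (2 * k) (n - k))` for some `k` with `1 ≤ k ≤ min r n`.
In particular `grundy 0 r = 0` and `grundy n 0 = 0`. -/
noncomputable def grundy (n r : ℕ) : ℕ :=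
  sInf {m : ℕ | ∀ k, 1 ≤ k → k ≤ min r n → grundy (n - k) (min (2 * k) (n - k)) ≠ m}
termination_by n
decreasing_by
  have : k ≤ n := le_trans ‹k ≤ min r n› (min_le_right _ _)
  omega

lemma grundy_eq_zero_iff_forall_move (n r : ℕ) :
    grundy n r = 0 ↔ ∀ k, 1 ≤ k → k ≤ min r n → grundy (n - k) (min (2 * k) (n - k)) ≠ 0 := by
  rw [grundy, Nat.sInf_eq_zero, or_iff_left]
  · rfl
  obtain ⟨m, hm⟩ := Infinite.exists_notMem_finset
    ((Finset.Icc 1 (min r n)).image fun k => grundy (n - k) (min (2 * k) (n - k)))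
  refine Set.nonempty_iff_ne_empty.mp ⟨m, fun k hk1 hkn hkm => hm ?_⟩
  exact Finset.mem_image.mpr ⟨k, Finset.mem_Icc.mpr ⟨hk1, hkn⟩, hkm⟩

theorem grundy_eq_zero_of_isP_and_ne_zero_of_isN (P N : ℕ → ℕ → Prop)
    (hP : ∀ n r, P n r → ∀ k, 1 ≤ k → k ≤ min r n → N (n - k) (min (2 * k) (n - k)))
    (hN : ∀ n r, N n r → ∃ k, 1 ≤ k ∧ k ≤ min r n ∧ P (n - k) (min (2 * k) (n - k)))
    (n r : ℕ) : (P n r → grundy n r = 0) ∧ (N n r → grundy n r ≠ 0) := by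
  induction n using Nat.strong_induction_on generalizing r with
  | _ n ih =>
  refine ⟨fun hPnr => ?_, fun hNnr => ?_⟩
  · refine (grundy_eq_zero_iff_forall_move n r).mpr fun k hk1 hkn => ?_
    exact (ih (n - k) (by omega) _).2 (hP n r hPnr k hk1 hkn)
  · obtain ⟨k, hk1, hkn, hPk⟩ := hN n r hNnr
    rw [Ne, grundy_eq_zero_iff_forall_move]
    exact fun h => h k hk1 hkn ((ih (n - k) (by omega) _).1 hPk)

lemma fib_add_one_le_two_mul_fib {c : ℕ} (hc : 0 < c) : Nat.fib (c + 1) ≤ 2 * Nat.fib c := by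
  obtain ⟨d, rfl⟩ := Nat.exists_eq_add_of_lt hc
  rw [zero_add, Nat.fib_add_two]
  have := Nat.fib_le_fib_succ (n := d)
  omega

lemma two_mul_fib_lt_fib_add_two {a : ℕ} (ha : 2 ≤ a) : 2 * Nat.fib a < Nat.fib (a + 2) := by
  rw [Nat.fib_add_two]
  have := Nat.fib_lt_fib_succ ha
  omega

lemma List.headI_append_of_ne_nil {α : Type*} [Inhabited α] {l t : List α} (hl : l ≠ []) :
    (l ++ t).headI = l.headI := by
  obtain ⟨a, l, rfl⟩ := List.exists_cons_of_ne_nil hl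
  rfl

namespace IsZeck

variable {n m : ℕ} {l t : List ℕ}

lemma ne_nil_s4 (hn : 0 < n) (hl : IsZeck n l) : l ≠ [] := by
  rintro rfl
  simp [IsZeck] at hl
  omega

lemma fib_headI_le (hl : IsZeck n l) : Nat.fib l.headI ≤ n := by
  obtain ⟨-, -, rfl⟩ := hl
  cases l with
  | nil => simp
  | cons a t => simp

lemma singleton {a : ℕ} (ha : 2 ≤ a) : IsZeck (Nat.fib a) [a] :=
  ⟨by simpa using ha, List.isChain_singleton a, by simp⟩

lemma of_cons {a : ℕ} (hl : IsZeck n (a :: t)) : IsZeck (n - Nat.fib a) t := by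
  obtain ⟨h2, hchain, rfl⟩ := hl
  exact ⟨fun i hi => h2 i (List.mem_cons_of_mem a hi), hchain.tail, by simp⟩

lemma append (hl : IsZeck n l) (ht : IsZeck m t)
    (hgap : ∀ i ∈ l.getLast?, ∀ j ∈ t.head?, i + 2 ≤ j) : IsZeck (n + m) (l ++ t) := by
  obtain ⟨hl2, hlc, rfl⟩ := hl
  obtain ⟨ht2, htc, rfl⟩ := ht
  refine ⟨fun i hi => ?_, List.isChain_append.mpr ⟨hlc, htc, hgap⟩, by simp⟩
  rcases List.mem_append.mp hi with hi | hi
  exacts [hl2 i hi, ht2 i hi]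

end IsZeck

theorem exists_isZeck_fib_sub {a k : ℕ} (hk : 0 < k) (hka : k < Nat.fib a) :
    ∃ l, IsZeck (Nat.fib a - k) l ∧ Nat.fib l.headI ≤ 2 * k ∧ ∀ i ∈ l, i < a := by
  induction a using Nat.strong_induction_on generalizing k with
  | _ a ih =>
  obtain ⟨c, rfl⟩ : ∃ c, a = c + 2 := by
    have : 2 ≤ a := by by_contra! h; interval_cases a <;> simp at hka; omega
    exact ⟨a - 2, by omega⟩
  have hfib := Nat.fib_add_two (n := c)
  rcases lt_trichotomy k (Nat.fib c) with hlt | rfl | hgt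
  · -- `F_{c+2} - k = (F_c - k) + F_{c+1}`
    obtain ⟨l, hl, hhead, hlt'⟩ := ih c (by omega) hk hlt
    have hne : l ≠ [] := hl.ne_nil_s4 (by omega)
    have hc : 0 < c := Nat.fib_pos.mp (by omega)
    refine ⟨l ++ [c + 1], ?_, by rwa [List.headI_append_of_ne_nil hne], fun i hi => ?_⟩
    · convert hl.append (IsZeck.singleton (a := c + 1) (by omega)) ?_ using 1
      · omega
      · intro i hi j hj
        have := hlt' i (List.mem_of_mem_getLast? hi)
        simp only [List.head?_cons, Option.mem_def, Option.some.injEq] at hj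
        omega
    · rcases List.mem_append.mp hi with hi | hi
      · have := hlt' i hi; omega
      · simp only [List.mem_singleton] at hi; omega
  · have hc : 0 < c := Nat.fib_pos.mp hk
    refine ⟨[c + 1], ?_, fib_add_one_le_two_mul_fib hc, by simp⟩
    rw [hfib, Nat.add_sub_cancel_left]
    exact IsZeck.singleton (by omega)
  · -- `F_{c+2} - k = F_{c+1} - (k - F_c)`
    obtain ⟨l, hl, hhead, hlt'⟩ := ih (c + 1) (by omega) (k := k - Nat.fib c) (by omega) (by omega)
    refine ⟨l, ?_, by omega, fun i hi => (hlt' i hi).trans (by omega)⟩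
    convert hl using 1
    omega

theorem IsZeck.exists_isZeck_sub {n k : ℕ} {l : List ℕ} (hl : IsZeck n l) (hk : 0 < k)
    (hkl : k < Nat.fib l.headI) :
    ∃ l', IsZeck (n - k) l' ∧ Nat.fib l'.headI ≤ 2 * k := by
  cases l with
  | nil => simp at hkl
  | cons a t =>
  change k < Nat.fib a at hkl
  obtain ⟨l', hl', hhead, hlt⟩ := exists_isZeck_fib_sub hk hkl
  have hfa : Nat.fib a ≤ n := hl.fib_headI_le
  have hne : l' ≠ [] := hl'.ne_nil_s4 (by omega)
  refine ⟨l' ++ t, ?_, by rwa [List.headI_append_of_ne_nil hne]⟩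
  have hsum : n - k = (Nat.fib a - k) + (n - Nat.fib a) := by omega
  rw [hsum]
  refine hl'.append hl.of_cons fun i hi j hj => ?_
  have := hlt i (List.mem_of_mem_getLast? hi)
  cases t with
  | nil => simp at hj
  | cons b t =>
    have hab : a + 2 ≤ b := (List.isChain_cons_cons.mp hl.2.1).1
    simp only [List.head?_cons, Option.mem_def, Option.some.injEq] at hj
    omega

def IsPPosition (n r : ℕ) : Prop :=
  n = 0 ∨ ∃ l, IsZeck n l ∧ r < Nat.fib l.headI

def IsNPosition (n r : ℕ) : Prop :=
  0 < n ∧ ∃ l, IsZeck n l ∧ Nat.fib l.headI ≤ r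

theorem isNPosition_of_isPPosition_of_move {n r k : ℕ} (h : IsPPosition n r) (hk : 1 ≤ k)
    (hkn : k ≤ min r n) : IsNPosition (n - k) (min (2 * k) (n - k)) := by
  rcases h with rfl | ⟨l, hl, hr⟩
  · omega
  obtain ⟨l', hl', hhead⟩ := hl.exists_isZeck_sub hk (by omega)
  have : k < n := (lt_of_lt_of_le (by omega) hl.fib_headI_le)
  exact ⟨by omega, l', hl', le_min hhead hl'.fib_headI_le⟩

theorem exists_move_isPPosition_of_isNPosition {n r : ℕ} (h : IsNPosition n r) :
    ∃ k, 1 ≤ k ∧ k ≤ min r n ∧ IsPPosition (n - k) (min (2 * k) (n - k)) := by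
  obtain ⟨hn, l, hl, hr⟩ := h
  obtain ⟨a, t, rfl⟩ := List.exists_cons_of_ne_nil (hl.ne_nil_s4 hn)
  have ha : 2 ≤ a := hl.1 a (List.mem_cons_self ..)
  have hfa : Nat.fib a ≤ n := hl.fib_headI_le
  refine ⟨Nat.fib a, Nat.fib_pos.mpr (by omega), le_min hr hfa, ?_⟩
  cases t with
  | nil => exact Or.inl (by simpa using hl.of_cons.2.2.symm)
  | cons b t =>
  refine Or.inr ⟨b :: t, hl.of_cons, ?_⟩
  have hab : a + 2 ≤ b := (List.isChain_cons_cons.mp hl.2.1).1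
  calc min (2 * Nat.fib a) _ ≤ 2 * Nat.fib a := min_le_left ..
    _ < Nat.fib (a + 2) := two_mul_fib_lt_fib_add_two ha
    _ ≤ Nat.fib b := Nat.fib_mono hab

/-- For every positive integer `n` and every natural number `r`, `𝒢(n, r) = 0` if and only
if `r < z₁(n)`. -/
theorem grundy_eq_zero_iff (n r : ℕ) (hn : 0 < n) (l : List ℕ) (hl : IsZeck n l) :
    grundy n r = 0 ↔ r < Nat.fib l.headI := by
  have hclass := grundy_eq_zero_of_isP_and_ne_zero_of_isN IsPPosition IsNPosition
    (fun _ _ h _ hk hkn => isNPosition_of_isPPosition_of_move h hk hkn)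
    (fun _ _ h => exists_move_isPPosition_of_isNPosition h) n r
  refine ⟨fun h => ?_, fun hr => hclass.1 (Or.inr ⟨l, hl, hr⟩)⟩
  by_contra! hr
  exact hclass.2 ⟨hn, l, hl, hr⟩ h
end

section
/- For every natural number n, 𝒢(n) ≤ ⌈2√n⌉ + 1, where √n denotes the real square root of n. -/
theorem grundy_le_min (n r : ℕ) : grundy n r ≤ min r n := by
  rw [grundy]
  by_contra h
  push_neg at h
  have key : ∀ m ∈ Finset.range (min r n + 1),
      ∃ k ∈ Finset.Icc 1 (min r n), grundy (n - k) (min (2 * k) (n - k)) = m := by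
    intro m hm
    by_contra hc
    push_neg at hc
    have hmS : m ∈ {m : ℕ | ∀ k, 1 ≤ k → k ≤ min r n →
        grundy (n - k) (min (2 * k) (n - k)) ≠ m} := by
      intro k hk1 hk2
      exact hc k (Finset.mem_Icc.mpr ⟨hk1, hk2⟩)
    have h2 := Nat.sInf_le hmS
    simp only [Finset.mem_range] at hm
    omega
  have hsub : Finset.range (min r n + 1) ⊆
      (Finset.Icc 1 (min r n)).image (fun k => grundy (n - k) (min (2 * k) (n - k))) := by
    intro m hm
    obtain ⟨k, hk, hv⟩ := key m hm
    exact Finset.mem_image.mpr ⟨k, hk, hv⟩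
  have h1 := Finset.card_le_card hsub
  have h2 := Finset.card_image_le (s := Finset.Icc 1 (min r n))
    (f := fun k => grundy (n - k) (min (2 * k) (n - k)))
  simp only [Finset.card_range, Nat.card_Icc] at h1 h2
  omega

theorem grundy_sq_le (v : ℕ) : ∀ n r, v ≤ grundy n r → v * v / 4 ≤ n := by
  induction v with
  | zero => intro n r _; simp
  | succ v ih =>
    intro n r h
    have hg : grundy n r = sInf {m : ℕ | ∀ k, 1 ≤ k → k ≤ min r n →
        grundy (n - k) (min (2 * k) (n - k)) ≠ m} := by rw [grundy]
    have hvnot : v ∉ {m : ℕ | ∀ k, 1 ≤ k → k ≤ min r n →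
        grundy (n - k) (min (2 * k) (n - k)) ≠ m} := by
      intro hmem
      have := Nat.sInf_le hmem
      omega
    simp only [Set.mem_setOf_eq, not_forall] at hvnot
    obtain ⟨k, hk1, hk2, hkv⟩ := hvnot
    push_neg at hkv
    have hkn : k ≤ n := le_trans hk2 (min_le_right _ _)
    have hle := grundy_le_min (n - k) (min (2 * k) (n - k))
    rw [hkv] at hle
    have hv2k : v ≤ 2 * k := le_trans (le_trans hle (min_le_left _ _)) (min_le_left _ _)
    have hih : v * v / 4 ≤ n - k := ih (n - k) _ (le_of_eq hkv.symm)
    obtain ⟨w, hw | hw⟩ := Nat.even_or_odd' v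
    · have e1 : (v + 1) * (v + 1) = 4 * (w * w) + 4 * w + 1 := by subst hw; ring
      have e2 : v * v = 4 * (w * w) := by subst hw; ring
      set c := w * w with hc
      omega
    · have e1 : (v + 1) * (v + 1) = 4 * (w * w) + 8 * w + 4 := by subst hw; ring
      have e2 : v * v = 4 * (w * w) + 4 * w + 1 := by subst hw; ring
      set c := w * w with hc
      omega

/-- For every natural number `n`, `𝒢(n) ≤ ⌈2√n⌉ + 1`, where `√n` is the real square root
of `n` and `𝒢(n) = 𝒢(n, n)`. -/
theorem grundy_upper_bound (n : ℕ) :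
    grundy n n ≤ ⌈2 * Real.sqrt n⌉₊ + 1 := by
  obtain ⟨v, hv⟩ : ∃ v, grundy n n = v := ⟨_, rfl⟩
  rw [hv]
  have hA : v * v / 4 ≤ n := grundy_sq_le v n n (le_of_eq hv.symm)
  have hhalf : v / 2 ≤ Nat.sqrt n := by
    apply Nat.le_sqrt.mpr
    obtain ⟨w, hw | hw⟩ := Nat.even_or_odd' v
    · have e2 : v * v = 4 * (w * w) := by subst hw; ring
      have e3 : v / 2 = w := by omega
      rw [e3]
      set c := w * w with hc
      omega
    · have e2 : v * v = 4 * (w * w) + 4 * w + 1 := by subst hw; ring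
      have e3 : v / 2 = w := by omega
      rw [e3]
      set c := w * w with hc
      omega
  have hreal : ((2 * (v / 2) : ℕ) : ℝ) ≤ 2 * Real.sqrt n := by
    push_cast
    have h1 : ((v / 2 : ℕ) : ℝ) ≤ (Nat.sqrt n : ℝ) := by exact_mod_cast hhalf
    have h2 : (Nat.sqrt n : ℝ) ≤ Real.sqrt n := Real.nat_sqrt_le_real_sqrt
    nlinarith
  have hceil : 2 * (v / 2) ≤ ⌈2 * Real.sqrt n⌉₊ := by
    calc 2 * (v / 2) = ⌈((2 * (v / 2) : ℕ) : ℝ)⌉₊ := (Nat.ceil_natCast _).symm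
    _ ≤ ⌈2 * Real.sqrt n⌉₊ := Nat.ceil_mono hreal
  omega
end
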